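/- A subset U ⊆ Sym(Ω) admits a perfect refiner if and only if U = Iso(S, T) for some labelled digraph stacks S and T on Ω. In particular, a non-empty subset admits a perfect refiner iff it is a right coset of the Sym(Ω)-induced automorphism group of some labelled digraph stack. -/

import Mathlib

attribute [local instance] Classical.propDecidable

/-- A (vertex- and arc-)labelled digraph on vertex set `Ω` with labels in `L`.
The arcs are the pairs on which `alabel` is not `none`. -/
structure LDigraph (Ω : Type*) (L : Type*) where
  vlabel : Ω → L
  alabel : Ω × Ω → Option L

namespace LDigraph

variable {Ω L : Type*}

/-- The action of `Sym(Ω)` on labelled digraphs: `Γ.act g` is `Γ^g`. -/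
def act (Γ : LDigraph Ω L) (g : Equiv.Perm Ω) : LDigraph Ω L where
  vlabel := fun δ => Γ.vlabel (g⁻¹ δ)
  alabel := fun p => Γ.alabel (g⁻¹ p.1, g⁻¹ p.2)

/-- The set of arcs of a labelled digraph. -/
def arcs (Γ : LDigraph Ω L) : Set (Ω × Ω) := {p | Γ.alabel p ≠ none}

/-- The set of permutations inducing an isomorphism from `Γ` to `Δ`. -/
def Iso (Γ Δ : LDigraph Ω L) : Set (Equiv.Perm Ω) := {g | Γ.act g = Δ}

end LDigraph

/-- A labelled digraph stack on `Ω`: a finite list of labelled digraphs on `Ω`. -/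
abbrev Stack (Ω L : Type*) := List (LDigraph Ω L)

namespace Stack

variable {Ω L : Type*}

/-- Entrywise action of `Sym(Ω)` on labelled digraph stacks. -/
def act (S : Stack Ω L) (g : Equiv.Perm Ω) : Stack Ω L := S.map (fun Γ => Γ.act g)

/-- The set of permutations inducing an isomorphism from the stack `S` to the stack `T`. -/
def Iso (S T : Stack Ω L) : Set (Equiv.Perm Ω) := {g | Stack.act S g = T}

/-- The squashed labelled digraph of a stack: arcs are the union of the arcs;
a vertex label is the list of the vertex labels; an arc label is the list of
the arc labels, with `none` (the symbol `#`) for missing arcs. -/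
noncomputable def squash (S : Stack Ω L) : LDigraph Ω (List (Option L)) where
  vlabel := fun δ => S.map (fun Γ => some (Γ.vlabel δ))
  alabel := fun p =>
    if ∀ Γ ∈ S, Γ.alabel p = none then none
    else some (S.map (fun Γ => Γ.alabel p))

end Stack

/-- `(fL, fR)` is a refiner for `U ⊆ Sym(Ω)`:
for all isomorphic stacks `S`, `T`, `U ∩ Iso(S,T) ⊆ U ∩ Iso(fL S, fR T)`. -/
def IsRefiner {Ω L : Type*} (U : Set (Equiv.Perm Ω))
    (fL fR : Stack Ω L → Stack Ω L) : Prop :=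
  ∀ S T : Stack Ω L, (Stack.Iso S T).Nonempty →
    U ∩ Stack.Iso S T ⊆ U ∩ Stack.Iso (fL S) (fR T)

/-- `(fL, fR)` is a perfect refiner for `U`:
`U ∩ Iso(S,T) = Iso(S ∥ fL S, T ∥ fR T)` for all stacks `S`, `T`. -/
def IsPerfectRefiner {Ω L : Type*} (U : Set (Equiv.Perm Ω))
    (fL fR : Stack Ω L → Stack Ω L) : Prop :=
  ∀ S T : Stack Ω L, U ∩ Stack.Iso S T = Stack.Iso (S ++ fL S) (T ++ fR T)

/-!
Specialising a perfect refiner to the empty stacks gives `U = Iso(fL [], fR [])`. Conversely,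
for `U = Iso(S₀, T₀)` with `|S₀| = |T₀|` the constant refiners work, because `Iso` of
concatenations of equally long stacks is the intersection of the `Iso`s; if `|S₀| ≠ |T₀|` then
`U = ∅`, and appending one digraph on the right only makes `Iso` empty. Finally
`Iso(S, S^g) = g · Aut(S)`, and every non-empty `Iso(S, T)` has this form.
-/

namespace LDigraph

variable {Ω L : Type*}

@[simp]
lemma act_one (Γ : LDigraph Ω L) : Γ.act 1 = Γ := rfl

@[simp]
lemma act_act (Γ : LDigraph Ω L) (g h : Equiv.Perm Ω) : (Γ.act g).act h = Γ.act (h * g) := rfl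

end LDigraph

namespace Stack

variable {Ω L : Type*}

@[simp]
lemma act_one (S : Stack Ω L) : S.act 1 = S := by
  simp [act]

@[simp]
lemma act_act (S : Stack Ω L) (g h : Equiv.Perm Ω) : (S.act g).act h = S.act (h * g) := by
  simp [act, Function.comp_def]

@[simp]
lemma length_act (S : Stack Ω L) (g : Equiv.Perm Ω) : (S.act g).length = S.length :=
  List.length_map _

lemma act_append (S S' : Stack Ω L) (g : Equiv.Perm Ω) :
    (S ++ S').act g = S.act g ++ S'.act g :=
  List.map_append

@[simp]
lemma iso_nil : Iso ([] : Stack Ω L) [] = Set.univ := by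
  ext g
  simp [Iso, act]

lemma length_eq_of_mem_iso {S T : Stack Ω L} {g : Equiv.Perm Ω} (hg : g ∈ Iso S T) :
    S.length = T.length := by
  rw [← hg, length_act]

lemma iso_eq_empty_of_length_ne {S T : Stack Ω L} (h : S.length ≠ T.length) :
    Iso S T = ∅ :=
  Set.eq_empty_iff_forall_notMem.mpr fun _ hg => h (length_eq_of_mem_iso hg)

lemma iso_append {S T S' T' : Stack Ω L} (h : S'.length = T'.length) :
    Iso (S ++ S') (T ++ T') = Iso S T ∩ Iso S' T' := by
  ext g
  simp only [Iso, Set.mem_inter_iff, Set.mem_ofPred_eq, act_append]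
  constructor
  · intro hg
    have hlen : (S.act g).length = T.length := by
      have := congrArg List.length hg
      simp only [List.length_append, length_act] at this ⊢
      omega
    exact List.append_inj hg hlen
  · rintro ⟨h₁, h₂⟩
    rw [h₁, h₂]

lemma iso_act_eq_image (S : Stack Ω L) (g : Equiv.Perm Ω) :
    Iso S (S.act g) = (g * ·) '' Iso S S := by
  ext h
  simp only [Iso, Set.mem_image, Set.mem_ofPred_eq]
  constructor
  · intro hh
    refine ⟨g⁻¹ * h, ?_, mul_inv_cancel_left g h⟩
    rw [← act_act, hh, act_act, inv_mul_cancel, act_one]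
  · rintro ⟨a, ha, rfl⟩
    rw [← act_act, ha]

lemma iso_eq_image_of_mem {S T : Stack Ω L} {g : Equiv.Perm Ω} (hg : g ∈ Iso S T) :
    Iso S T = (g * ·) '' Iso S S := by
  rw [← iso_act_eq_image, show S.act g = T from hg]

end Stack

section PerfectRefiner

variable {Ω L : Type*}

lemma isPerfectRefiner_const {S₀ T₀ : Stack Ω L} (h : S₀.length = T₀.length) :
    IsPerfectRefiner (Stack.Iso S₀ T₀) (fun _ => S₀) (fun _ => T₀) := fun _ _ => by
  rw [Stack.iso_append h, Set.inter_comm]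

lemma isPerfectRefiner_empty (Γ : LDigraph Ω L) :
    IsPerfectRefiner (∅ : Set (Equiv.Perm Ω)) id (· ++ [Γ]) := fun S T => by
  rw [Set.empty_inter, eq_comm]
  apply Stack.iso_eq_empty_of_length_ne
  simp only [id, List.length_append, List.length_singleton]
  omega

lemma exists_isPerfectRefiner_iff (U : Set (Equiv.Perm Ω)) :
    (∃ fL fR : Stack Ω L → Stack Ω L, IsPerfectRefiner U fL fR) ↔
      ∃ S T : Stack Ω L, U = Stack.Iso S T := by
  constructor
  · rintro ⟨fL, fR, h⟩
    refine ⟨fL [], fR [], ?_⟩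
    simpa using h [] []
  · rintro ⟨S₀, T₀, rfl⟩
    by_cases hlen : S₀.length = T₀.length
    · exact ⟨_, _, isPerfectRefiner_const hlen⟩
    · obtain ⟨Γ, -⟩ : ∃ Γ, Γ ∈ S₀ ++ T₀ :=
        List.exists_mem_of_ne_nil _ fun h => hlen (by simp_all)
      rw [Stack.iso_eq_empty_of_length_ne hlen]
      exact ⟨_, _, isPerfectRefiner_empty Γ⟩

lemma exists_iso_eq_iff_exists_coset {U : Set (Equiv.Perm Ω)} (hU : U.Nonempty) :
    (∃ S T : Stack Ω L, U = Stack.Iso S T) ↔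
      ∃ (S : Stack Ω L) (g : Equiv.Perm Ω), U = (g * ·) '' Stack.Iso S S := by
  constructor
  · rintro ⟨S, T, rfl⟩
    obtain ⟨g, hg⟩ := hU
    exact ⟨S, g, Stack.iso_eq_image_of_mem hg⟩
  · rintro ⟨S, g, rfl⟩
    exact ⟨S, S.act g, (Stack.iso_act_eq_image S g).symm⟩

end PerfectRefiner

theorem stmt15_general {Ω L : Type*} (U : Set (Equiv.Perm Ω)) :
    ((∃ fL fR : Stack Ω L → Stack Ω L, IsPerfectRefiner U fL fR) ↔
      ∃ S T : Stack Ω L, U = Stack.Iso S T) ∧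
    (U.Nonempty →
      ((∃ fL fR : Stack Ω L → Stack Ω L, IsPerfectRefiner U fL fR) ↔
        ∃ (S : Stack Ω L) (g : Equiv.Perm Ω),
          U = (fun a => g * a) '' Stack.Iso S S)) :=
  ⟨exists_isPerfectRefiner_iff U, fun hU =>
    (exists_isPerfectRefiner_iff U).trans (exists_iso_eq_iff_exists_coset hU)⟩

/-- A subset `U ⊆ Sym(Ω)` admits a perfect refiner iff `U = Iso(S,T)` for some
labelled digraph stacks `S`, `T`; in particular a non-empty subset admits a perfect
refiner iff it is a right coset (`Aut(S)·g = {g * a : a ∈ Aut(S)}` in Lean's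
convention) of the automorphism group of some labelled digraph stack. -/
theorem stmt15 {Ω L : Type*} [Finite Ω] (U : Set (Equiv.Perm Ω)) :
    ((∃ fL fR : Stack Ω L → Stack Ω L, IsPerfectRefiner U fL fR) ↔
      ∃ S T : Stack Ω L, U = Stack.Iso S T) ∧
    (U.Nonempty →
      ((∃ fL fR : Stack Ω L → Stack Ω L, IsPerfectRefiner U fL fR) ↔
        ∃ (S : Stack Ω L) (g : Equiv.Perm Ω),
          U = (fun a => g * a) '' Stack.Iso S S)) :=
  stmt15_general U
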